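/- arXiv:math/0410052 — 2 statements merged into one kernel-verified Lean document; each statement's English description precedes it below -/
import Mathlib

section
/- Let S be a Polish space and let μ, ν be Borel probability measures on S. Then sup { |∫ f dμ − ∫ f dν| : f : S → ℝ bounded continuous with |f(x) − f(y)| ≤ 1 for all x, y ∈ S } = (1/2) ‖μ − ν‖_v, where ‖·‖_v denotes the total variation norm of a finite signed Borel measure. -/
open MeasureTheory ProbabilityTheory ENNReal Set

noncomputable section

/-- The total variation norm `‖μ - ν‖_v` of the difference of two finite measures:
the total mass of the positive part plus that of the negative part of the
Hahn–Jordan decomposition of `μ - ν`. -/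
def tvDist {α : Type*} [MeasurableSpace α] (μ ν : Measure α) : ℝ≥0∞ :=
  (μ - ν) Set.univ + (ν - μ) Set.univ

/-!
A Hahn set `s` for `(μ, ν)` splits `μ = (μ - ν) + κ` and `ν = (ν - μ) + κ`, where `μ - ν` and
`ν - μ` have the same mass `δ = ½ ‖μ - ν‖_v` because `μ` and `ν` do. A function with values in an
interval `[m, m + 1]` integrates against both into `[m δ, (m + 1) δ]`, so
`|∫ f dμ - ∫ f dν| ≤ δ`. Conversely `μ s - ν s = δ`, and by regularity `s` contains a closed `F`
and lies in an open `U` with `μ (s \ F)` and `ν (U \ s)` small; an Urysohn function that is `1`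
on `F` and `0` off `U` then achieves `δ` up to that error.
-/

open scoped BoundedContinuousFunction

namespace MeasureTheory.Measure

variable {α : Type*} [MeasurableSpace α] {μ ν : Measure α}

theorem restrict_le_restrict_of_forall_subset {s : Set α} (hs : MeasurableSet s)
    (h : ∀ t, MeasurableSet t → t ⊆ s → μ t ≤ ν t) : μ.restrict s ≤ ν.restrict s :=
  le_iff.2 fun t ht => by
    simpa only [restrict_apply ht] using h _ (ht.inter hs) inter_subset_right

theorem exists_restrict_le_restrict_and_restrict_compl_le (μ ν : Measure α)
    [IsFiniteMeasure μ] [IsFiniteMeasure ν] :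
    ∃ s, MeasurableSet s ∧ ν.restrict s ≤ μ.restrict s ∧ μ.restrict sᶜ ≤ ν.restrict sᶜ :=
  let ⟨s, hs, hνμ, hμν⟩ := hahn_decomposition μ ν
  ⟨s, hs, restrict_le_restrict_of_forall_subset hs hνμ,
    restrict_le_restrict_of_forall_subset hs.compl hμν⟩

theorem sub_eq_restrict_sub_restrict {s : Set α} (hs : MeasurableSet s)
    (hsc : μ.restrict sᶜ ≤ ν.restrict sᶜ) : μ - ν = μ.restrict s - ν.restrict s := by
  rw [← restrict_add_restrict_compl (μ := μ - ν) hs, restrict_sub_eq_restrict_sub_restrict hs,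
    restrict_sub_eq_restrict_sub_restrict hs.compl, sub_eq_zero_of_le hsc, add_zero]

/-- `κ` is `μ ⊓ ν`, exhibited as `ν|s + μ|sᶜ` for a Hahn set `s`. -/
theorem exists_eq_sub_add_and_eq_sub_add (μ ν : Measure α) [IsFiniteMeasure μ]
    [IsFiniteMeasure ν] :
    ∃ κ : Measure α, IsFiniteMeasure κ ∧ μ = μ - ν + κ ∧ ν = ν - μ + κ := by
  obtain ⟨s, hs, hνμ, hμν⟩ := exists_restrict_le_restrict_and_restrict_compl_le μ ν
  refine ⟨ν.restrict s + μ.restrict sᶜ, inferInstance, ?_, ?_⟩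
  · rw [sub_eq_restrict_sub_restrict hs hμν, ← add_assoc, sub_add_cancel_of_le hνμ,
      restrict_add_restrict_compl hs]
  · rw [sub_eq_restrict_sub_restrict (s := sᶜ) hs.compl (by rwa [compl_compl]), add_left_comm,
      sub_add_cancel_of_le hμν, restrict_add_restrict_compl hs]

theorem sub_apply_univ_eq_sub_apply_univ [IsFiniteMeasure μ] [IsFiniteMeasure ν]
    (h : μ univ = ν univ) : (μ - ν) univ = (ν - μ) univ := by
  obtain ⟨κ, _, hμ, hν⟩ := exists_eq_sub_add_and_eq_sub_add μ ν
  have hμ' : μ univ = (μ - ν) univ + κ univ := by rw [← add_apply, ← hμ]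
  have hν' : ν univ = (ν - μ) univ + κ univ := by rw [← add_apply, ← hν]
  rwa [hμ', hν', ENNReal.add_left_inj (measure_ne_top κ univ)] at h

end MeasureTheory.Measure

theorem exists_forall_mem_Icc_of_abs_sub_le {ι : Type*} {f : ι → ℝ} {w : ℝ}
    (h : ∀ x y, |f x - f y| ≤ w) : ∃ m, ∀ x, f x ∈ Icc m (m + w) := by
  rcases isEmpty_or_nonempty ι with hι | hι
  · exact ⟨0, isEmptyElim⟩
  have ⟨x₀⟩ := hι
  have hbdd : BddBelow (range f) :=
    ⟨f x₀ - w, forall_mem_range.2 fun x => by linarith [(abs_le.1 (h x₀ x)).2]⟩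
  refine ⟨⨅ x, f x, fun x => ⟨ciInf_le hbdd x, ?_⟩⟩
  have : f x - w ≤ ⨅ y, f y := le_ciInf fun y => by linarith [(abs_le.1 (h x y)).2]
  linarith

namespace MeasureTheory

variable {α : Type*} [MeasurableSpace α] {μ ν : Measure α}

theorem integral_mem_Icc_of_forall_mem_Icc [IsFiniteMeasure μ] {f : α → ℝ} (hf : Integrable f μ)
    {a b : ℝ} (h : ∀ x, f x ∈ Icc a b) :
    ∫ x, f x ∂μ ∈ Icc (μ.real univ * a) (μ.real univ * b) := by
  have hconst (c : ℝ) : ∫ _, c ∂μ = μ.real univ * c := by rw [integral_const, smul_eq_mul]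
  exact ⟨hconst a ▸ integral_mono (integrable_const a) hf fun x => (h x).1,
    hconst b ▸ integral_mono hf (integrable_const b) fun x => (h x).2⟩

theorem abs_integral_sub_integral_le [IsFiniteMeasure μ] [IsFiniteMeasure ν]
    (hmass : μ univ = ν univ) {f : α → ℝ} (hf : Measurable f) {m w : ℝ}
    (hfm : ∀ x, f x ∈ Icc m (m + w)) :
    |∫ x, f x ∂μ - ∫ x, f x ∂ν| ≤ w * (μ - ν).real univ := by
  obtain ⟨κ, _, hμ, hν⟩ := Measure.exists_eq_sub_add_and_eq_sub_add μ ν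
  have hint (ρ : Measure α) [IsFiniteMeasure ρ] : Integrable f ρ :=
    .of_bound hf.aestronglyMeasurable (|m| + |w|) <| ae_of_all _ fun x => abs_le.2
      ⟨by linarith [neg_abs_le m, abs_nonneg w, (hfm x).1],
        by linarith [le_abs_self m, le_abs_self w, (hfm x).2]⟩
  have hμ' : ∫ x, f x ∂μ = ∫ x, f x ∂(μ - ν) + ∫ x, f x ∂κ := by
    conv_lhs => rw [hμ]
    exact integral_add_measure (hint _) (hint _)
  have hν' : ∫ x, f x ∂ν = ∫ x, f x ∂(ν - μ) + ∫ x, f x ∂κ := by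
    conv_lhs => rw [hν]
    exact integral_add_measure (hint _) (hint _)
  have h₁ := integral_mem_Icc_of_forall_mem_Icc (hint (μ - ν)) hfm
  have h₂ := integral_mem_Icc_of_forall_mem_Icc (hint (ν - μ)) hfm
  rw [measureReal_def, ← Measure.sub_apply_univ_eq_sub_apply_univ hmass, ← measureReal_def] at h₂
  rw [hμ', hν', add_sub_add_right_eq_sub]
  linarith [abs_sub_le_of_le_of_le h₁.1 h₁.2 h₂.1 h₂.2]

theorem measureReal_le_integral_of_indicator_le [IsFiniteMeasure μ] {s : Set α}
    (hs : MeasurableSet s) {f : α → ℝ} (hf : Integrable f μ) (h : s.indicator 1 ≤ f) :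
    μ.real s ≤ ∫ x, f x ∂μ := by
  rw [← integral_indicator_one hs]
  exact integral_mono ((integrable_const 1).indicator hs) hf h

theorem integral_le_measureReal_of_le_indicator [IsFiniteMeasure μ] {s : Set α}
    (hs : MeasurableSet s) {f : α → ℝ} (hf : Integrable f μ) (h : f ≤ s.indicator 1) :
    ∫ x, f x ∂μ ≤ μ.real s := by
  rw [← integral_indicator_one hs]
  exact integral_mono hf ((integrable_const 1).indicator hs) h

theorem measureReal_le_add_of_measure_sdiff_le [IsFiniteMeasure μ] {s t : Set α} (hts : t ⊆ s)
    (ht : MeasurableSet t) {ε : ℝ} (hε : 0 ≤ ε) (h : μ (s \ t) ≤ ENNReal.ofReal ε) :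
    μ.real s ≤ μ.real t + ε := by
  have := ENNReal.toReal_le_of_le_ofReal hε h
  rw [← measureReal_def, measureReal_sdiff hts ht] at this
  linarith

variable [TopologicalSpace α] [NormalSpace α] [OpensMeasurableSpace α]

theorem exists_boundedContinuous_approx_indicator [IsFiniteMeasure μ]
    [IsFiniteMeasure ν] [μ.WeaklyRegular] [ν.OuterRegular] {s : Set α} (hs : MeasurableSet s)
    {ε : ℝ} (hε : 0 < ε) :
    ∃ g : α →ᵇ ℝ, (∀ x, g x ∈ Icc 0 1) ∧ μ.real s ≤ ∫ x, g x ∂μ + ε ∧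
      ∫ x, g x ∂ν ≤ ν.real s + ε := by
  have hε' : ENNReal.ofReal ε ≠ 0 := (ENNReal.ofReal_pos.2 hε).ne'
  obtain ⟨F, hFs, hF, hμF⟩ := hs.exists_isClosed_sdiff_lt (measure_ne_top μ s) hε'
  obtain ⟨U, hsU, hU, -, hνU⟩ := hs.exists_isOpen_sdiff_lt (measure_ne_top ν s) hε'
  obtain ⟨g, hgU, hgF, hg⟩ := exists_bounded_zero_one_of_closed hU.isClosed_compl hF
    (disjoint_compl_left.mono_right (hFs.trans hsU))
  refine ⟨g, hg, ?_, ?_⟩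
  · calc μ.real s ≤ μ.real F + ε :=
          measureReal_le_add_of_measure_sdiff_le hFs hF.measurableSet hε.le hμF.le
      _ ≤ ∫ x, g x ∂μ + ε := by
          gcongr
          exact measureReal_le_integral_of_indicator_le hF.measurableSet (g.integrable μ)
            (indicator_le' (fun x hx => (hgF hx).ge) fun x _ => (hg x).1)
  · calc ∫ x, g x ∂ν ≤ ν.real U :=
          integral_le_measureReal_of_le_indicator hU.measurableSet (g.integrable ν)
            (le_indicator (fun x _ => (hg x).2) fun x hx => (hgU hx).le)
      _ ≤ ν.real s + ε :=
          measureReal_le_add_of_measure_sdiff_le hsU hs hε.le hνU.le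

theorem exists_measureReal_sub_le_integral_sub_integral_add [IsFiniteMeasure μ]
    [IsFiniteMeasure ν] [μ.WeaklyRegular] [ν.OuterRegular] {ε : ℝ} (hε : 0 < ε) :
    ∃ g : α →ᵇ ℝ, (∀ x, g x ∈ Icc 0 1) ∧
      (μ - ν).real univ ≤ ∫ x, g x ∂μ - ∫ x, g x ∂ν + ε := by
  obtain ⟨s, hs, hνμ, hμν⟩ := Measure.exists_restrict_le_restrict_and_restrict_compl_le μ ν
  have hle : ν s ≤ μ s := by simpa using Measure.le_iff'.1 hνμ univ
  have hδ : (μ - ν).real univ = μ.real s - ν.real s := by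
    rw [measureReal_def, Measure.sub_eq_restrict_sub_restrict hs hμν,
      Measure.sub_apply .univ hνμ, Measure.restrict_apply_univ, Measure.restrict_apply_univ,
      ENNReal.toReal_sub_of_le hle (measure_ne_top μ s), measureReal_def, measureReal_def]
  obtain ⟨g, hg, hμg, hνg⟩ :=
    exists_boundedContinuous_approx_indicator (μ := μ) (ν := ν) hs (half_pos hε)
  exact ⟨g, hg, by linarith⟩

end MeasureTheory

/-- **Dual form of the total variation distance**: for Borel probability measures
`μ, ν` on a Polish space,
`sup { |∫ f dμ - ∫ f dν| : f bounded continuous, |f x - f y| ≤ 1 } = ½ ‖μ - ν‖_v`. -/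
theorem sup_bc_eq_half_tv
    {S : Type*} [TopologicalSpace S] [PolishSpace S] [MeasurableSpace S] [BorelSpace S]
    (μ ν : Measure S) [IsProbabilityMeasure μ] [IsProbabilityMeasure ν] :
    (⨆ f ∈ {f : S → ℝ | Continuous f ∧ (∃ M, ∀ x, |f x| ≤ M) ∧
        ∀ x y, |f x - f y| ≤ 1},
      ENNReal.ofReal |∫ x, f x ∂μ - ∫ x, f x ∂ν|) = tvDist μ ν / 2 := by
  set T := {f : S → ℝ | Continuous f ∧ (∃ M, ∀ x, |f x| ≤ M) ∧ ∀ x y, |f x - f y| ≤ 1}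
  set D := ⨆ f ∈ T, ENNReal.ofReal |∫ x, f x ∂μ - ∫ x, f x ∂ν|
  have hmass : μ univ = ν univ := by simp
  have hδ : (μ - ν) univ = ENNReal.ofReal ((μ - ν).real univ) :=
    (ofReal_measureReal (measure_ne_top _ _)).symm
  have hupper : D ≤ (μ - ν) univ := by
    refine iSup₂_le fun f ⟨hf, _, hosc⟩ => hδ ▸ ENNReal.ofReal_le_ofReal ?_
    obtain ⟨m, hm⟩ := exists_forall_mem_Icc_of_abs_sub_le hosc
    simpa using abs_integral_sub_integral_le hmass hf.measurable hm
  have hlower : (μ - ν).real univ ≤ D.toReal := by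
    refine le_of_forall_pos_le_add fun ε hε => ?_
    obtain ⟨g, hg, hgε⟩ := exists_measureReal_sub_le_integral_sub_integral_add (μ := μ) (ν := ν) hε
    have hgT : ⇑g ∈ T :=
      ⟨g.continuous,
        ⟨1, fun x => abs_le.2 ⟨by linarith [(hg x).1], (hg x).2⟩⟩,
        fun x y => by simpa using abs_sub_le_of_le_of_le (hg x).1 (hg x).2 (hg y).1 (hg y).2⟩
    have := (ENNReal.ofReal_le_iff_le_toReal (ne_top_of_le_ne_top (measure_ne_top _ _) hupper)).1
      (le_iSup₂_of_le (⇑g) hgT le_rfl)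
    linarith [le_abs_self (∫ x, g x ∂μ - ∫ x, g x ∂ν)]
  rw [tvDist, ← Measure.sub_apply_univ_eq_sub_apply_univ hmass, ← mul_two,
    ENNReal.mul_div_cancel_right two_ne_zero ofNat_ne_top]
  exact le_antisymm hupper (hδ ▸ ENNReal.ofReal_le_of_le_toReal hlower)

end
end

section
/- Let S be a Polish space, c : S × S → [0,∞) satisfy condition (★), (Ω, 𝒜, P) a probability space, ℳ a sub-σ-algebra of 𝒜, and X an S-valued random variable with ∫ c(x, x₀) dP_X(x) < ∞ for some x₀ ∈ S. Assume Lip_c is a separating class, i.e. any two Borel probability measures μ, ν on S with ∫ f dμ = ∫ f dν for all f ∈ Lip_c are equal. Then τ_c(ℳ, X) = 0 if and only if X is independent of ℳ. -/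
open MeasureTheory ProbabilityTheory ENNReal Set

noncomputable section

/-- The `μ`-completion of the σ-algebra `m`. -/
def muCompletion {α : Type*} (m : MeasurableSpace α) (μ : @Measure α m) : MeasurableSpace α :=
  letI := m
  inferInstanceAs (MeasurableSpace (MeasureTheory.NullMeasurableSpace α μ))

/-- The universal completion of a σ-algebra: the intersection of the `μ`-completions
over all finite nonnegative measures `μ`. -/
def univCompletion {α : Type*} (m : MeasurableSpace α) : MeasurableSpace α :=
  ⨅ (μ : @Measure α m) (_ : @IsFiniteMeasure α m μ), muCompletion m μ

/-- `Lip_c`: bounded continuous functions `u : S → ℝ` with `|u x - u y| ≤ c x y`. -/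
def LipC {S : Type*} [TopologicalSpace S] (c : S → S → ℝ) : Set (S → ℝ) :=
  {u | Continuous u ∧ (∃ M, ∀ x, |u x| ≤ M) ∧ ∀ x y, |u x - u y| ≤ c x y}

/-- Condition (★): `c x y = sup_{u ∈ Lip_c} |u x - u y|` for all `x, y`. -/
def StarCond {S : Type*} [TopologicalSpace S] (c : S → S → ℝ) : Prop :=
  ∀ x y, c x y = sSup {r : ℝ | ∃ u ∈ LipC c, r = |u x - u y|}

/-- `D(μ,ν)`: couplings of `μ` and `ν`, i.e. probability measures on `S × S`
with first margin `μ` and second margin `ν`. -/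
def Couplings {S : Type*} [MeasurableSpace S] (μ ν : Measure S) : Set (Measure (S × S)) :=
  {π | IsProbabilityMeasure π ∧ π.map Prod.fst = μ ∧ π.map Prod.snd = ν}

/-- The Kantorovich–Rubinštein functional `KR_c(μ,ν)`. -/
def KR {S : Type*} [MeasurableSpace S] (c : S → S → ℝ) (μ ν : Measure S) : ℝ≥0∞ :=
  ⨅ π ∈ Couplings μ ν, ∫⁻ p, ENNReal.ofReal (c p.1 p.2) ∂π

/-- The dual functional `ℓ_c(μ,ν) = sup_{f ∈ Lip_c} |∫ f dμ - ∫ f dν|`. -/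
def lipDist {S : Type*} [TopologicalSpace S] [MeasurableSpace S] (c : S → S → ℝ)
    (μ ν : Measure S) : ℝ≥0∞ :=
  ⨆ u ∈ LipC c, ENNReal.ofReal |∫ x, u x ∂μ - ∫ x, u x ∂ν|

/-- Regular conditional distribution of `Z` given the sub-σ-algebra `M`. -/
def IsRCD {Ω S : Type*} {mΩ : MeasurableSpace Ω} [MeasurableSpace S]
    (P : @Measure Ω mΩ) (M : MeasurableSpace Ω) (Z : Ω → S) (κ : Ω → Measure S) : Prop :=
  letI := mΩ
  (∀ ω, IsProbabilityMeasure (κ ω)) ∧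
  (∀ B : Set S, MeasurableSet B → Measurable[M] (fun ω => κ ω B)) ∧
  (∀ A : Set Ω, MeasurableSet[M] A → ∀ B : Set S, MeasurableSet B →
    P (A ∩ Z ⁻¹' B) = ∫⁻ ω in A, κ ω B ∂P)

/-- The law `P_X` of a random variable. -/
def law {Ω S : Type*} {mΩ : MeasurableSpace Ω} [MeasurableSpace S]
    (P : @Measure Ω mΩ) (X : Ω → S) : Measure S :=
  letI := mΩ
  P.map X

/-- The dependence coefficient `τ_c(ℳ, X)`, expressed through a given regular
conditional distribution `κ` of `X` given `ℳ`. -/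
def tauC {Ω S : Type*} {mΩ : MeasurableSpace Ω} [TopologicalSpace S] [MeasurableSpace S]
    (c : S → S → ℝ) (P : @Measure Ω mΩ) (κ : Ω → Measure S) (X : Ω → S) : ℝ≥0∞ :=
  letI := mΩ
  ∫⁻ ω, ⨆ u ∈ LipC c, ENNReal.ofReal |∫ x, u x ∂(κ ω) - ∫ x, u x ∂(law P X)| ∂P


/-! If `X` is independent of `ℳ`, then `P_X` is itself a regular conditional distribution of `X`
given `ℳ`; since the Borel σ-algebra of a Polish space is countably generated, regular conditional
distributions are a.s. unique, so `P_{X|ℳ} = P_X` a.s. and `τ_c(ℳ, X) = 0`.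

Conversely, `τ_c(ℳ, X) = 0` gives `∫ f dP_{X|ℳ} = ∫ f dP_X` a.s. for each `f ∈ Lip_c`. Averaging
over an event `A ∈ ℳ` with `P(A) > 0`, the law of `X` under `P(· | A)` has the same integrals
against `Lip_c` as `P_X`, hence equals `P_X` because `Lip_c` is separating; this is independence. -/

namespace MeasureTheory.Measure

theorem integral_comp {α β E : Type*} {mα : MeasurableSpace α} {mβ : MeasurableSpace β}
    [NormedAddCommGroup E] [NormedSpace ℝ E] {κ : Kernel α β} {μ : Measure α}
    {f : β → E} (hf : Integrable f (κ ∘ₘ μ)) :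
    ∫ y, f y ∂(κ ∘ₘ μ) = ∫ x, ∫ y, f y ∂κ x ∂μ := by
  rw [comp_eq_comp_const_apply] at hf ⊢
  rw [Kernel.integral_comp hf, Kernel.const_apply]

end MeasureTheory.Measure

theorem ae_eq_of_forall_setLIntegral_eq_mul {α β : Type*} {mα : MeasurableSpace α}
    [MeasurableSpace β] [MeasurableSpace.CountablyGenerated β] {μ : Measure α} [IsFiniteMeasure μ]
    {κ : α → Measure β} (hκ : Measurable κ) (hκ1 : ∀ a, IsProbabilityMeasure (κ a))
    {ν : Measure β} [IsFiniteMeasure ν]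
    (h : ∀ s t, MeasurableSet s → MeasurableSet t → ∫⁻ a in s, κ a t ∂μ = μ s * ν t) :
    ∀ᵐ a ∂μ, κ a = ν := by
  let K : Kernel α β := ⟨κ, hκ⟩
  have : IsMarkovKernel K := ⟨hκ1⟩
  have hprod : μ ⊗ₘ K = μ ⊗ₘ Kernel.const α ν := Measure.ext_prod fun hs ht => by
    simp only [Measure.compProd_apply_prod hs ht, Kernel.const_apply, setLIntegral_const]
    rw [mul_comm]
    exact h _ _ hs ht
  exact Kernel.ae_eq_of_compProd_eq hprod

section ConditionalLaw

variable {Ω S : Type*} {M mΩ : MeasurableSpace Ω} [MeasurableSpace S] {P : Measure Ω}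
  {X : Ω → S} {κ : Ω → Measure S}

theorem indep_comap_of_forall_map_cond_eq [IsFiniteMeasure P] (hM : M ≤ mΩ) (hX : Measurable X)
    (h : ∀ t, MeasurableSet[M] t → P t ≠ 0 → P[|t].map X = P.map X) :
    Indep (MeasurableSpace.comap X inferInstance) M P := by
  rw [Indep_iff]
  rintro _ t ⟨B, hB, rfl⟩ ht
  by_cases hPt : P t = 0
  · simp [measure_mono_null inter_subset_right hPt, hPt]
  calc P (X ⁻¹' B ∩ t) = P t * P[X ⁻¹' B|t] := by
        rw [inter_comm, ← cond_mul_eq_inter (hM t ht), mul_comm]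
    _ = P t * P (X ⁻¹' B) := by rw [← Measure.map_apply hX hB, h t ht hPt, Measure.map_apply hX hB]
    _ = P (X ⁻¹' B) * P t := mul_comm _ _

namespace IsRCD

theorem measurable (hκ : IsRCD P M X κ) : Measurable[M] κ :=
  Measure.measurable_of_measurable_coe _ hκ.2.1

theorem ae_eq_law_of_indep [MeasurableSpace.CountablyGenerated S] [IsFiniteMeasure P]
    (hM : M ≤ mΩ) (hX : Measurable X) (hκ : IsRCD P M X κ)
    (h : Indep (MeasurableSpace.comap X inferInstance) M P) : ∀ᵐ ω ∂P, κ ω = law P X := by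
  have : IsFiniteMeasure (law P X) := inferInstanceAs (IsFiniteMeasure (P.map X))
  refine ae_of_ae_trim hM <| ae_eq_of_forall_setLIntegral_eq_mul (μ := P.trim hM)
    hκ.measurable hκ.1 fun t B ht hB => ?_
  rw [restrict_trim hM P ht, lintegral_trim hM (hκ.2.1 B hB), ← hκ.2.2 t ht B hB, inter_comm,
    (Indep_iff _ _ _).1 h _ _ ⟨B, hB, rfl⟩ ht, trim_measurableSet_eq hM ht, law,
    Measure.map_apply hX hB, mul_comm]

theorem map_cond_eq_bind (hM : M ≤ mΩ) (hX : Measurable X) (hκ : IsRCD P M X κ) {t : Set Ω}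
    (ht : MeasurableSet[M] t) : P[|t].map X = P[|t].bind κ := by
  ext B hB
  rw [Measure.map_apply hX hB,
    Measure.bind_apply hB (hκ.measurable.mono hM le_rfl : Measurable κ).aemeasurable,
    cond_apply (hM t ht), ProbabilityTheory.cond, lintegral_smul_measure, ← hκ.2.2 t ht B hB,
    smul_eq_mul]

theorem map_cond_eq_map_of_forall_ae_integral_eq [IsProbabilityMeasure P] (hM : M ≤ mΩ)
    (hX : Measurable X) (hκ : IsRCD P M X κ) {F : Set (S → ℝ)}
    (hF : ∀ f ∈ F, Measurable f ∧ ∃ C, ∀ x, |f x| ≤ C)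
    (hsep : ∀ μ ν : Measure S, IsProbabilityMeasure μ → IsProbabilityMeasure ν →
      (∀ f ∈ F, ∫ x, f x ∂μ = ∫ x, f x ∂ν) → μ = ν)
    (h : ∀ f ∈ F, ∀ᵐ ω ∂P, ∫ x, f x ∂κ ω = ∫ x, f x ∂law P X)
    {t : Set Ω} (ht : MeasurableSet[M] t) (hPt : P t ≠ 0) : P[|t].map X = P.map X := by
  have : IsProbabilityMeasure P[|t] := cond_isProbabilityMeasure hPt
  have hlaw (μ : Measure Ω) [IsProbabilityMeasure μ] : IsProbabilityMeasure (μ.map X) :=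
    Measure.isProbabilityMeasure_map hX.aemeasurable
  refine hsep _ _ (hlaw _) (hlaw _) fun f hf => ?_
  obtain ⟨hfm, C, hC⟩ := hF f hf
  let K : Kernel Ω S := ⟨κ, hκ.measurable.mono hM le_rfl⟩
  have hK : K ∘ₘ P[|t] = P[|t].map X := (map_cond_eq_bind hM hX hκ ht).symm
  have : IsProbabilityMeasure (K ∘ₘ P[|t]) := hK ▸ hlaw _
  calc ∫ x, f x ∂P[|t].map X = ∫ x, f x ∂(K ∘ₘ P[|t]) := by rw [hK]
    _ = ∫ ω, ∫ x, f x ∂κ ω ∂P[|t] :=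
      Measure.integral_comp (Integrable.of_bound hfm.aestronglyMeasurable C (ae_of_all _ hC))
    _ = ∫ ω, ∫ x, f x ∂law P X ∂P[|t] :=
      integral_congr_ae (cond_absolutelyContinuous.ae_le (h f hf))
    _ = ∫ x, f x ∂P.map X := by simp [law]

end IsRCD

end ConditionalLaw

section DependenceCoefficient

variable {Ω S : Type*} {mΩ : MeasurableSpace Ω} [TopologicalSpace S] [MeasurableSpace S]
  {c : S → S → ℝ} {P : Measure Ω} {κ : Ω → Measure S} {X : Ω → S}

theorem tauC_eq_zero_of_ae_eq_law (h : ∀ᵐ ω ∂P, κ ω = law P X) : tauC c P κ X = 0 := by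
  refine (lintegral_congr_ae ?_).trans lintegral_zero
  filter_upwards [h] with ω hω
  simp [hω]

/- The supremum over the uncountable class `Lip_c` inside `τ_c` need not be measurable, so
`τ_c = 0` is exploited one function at a time. -/
theorem ae_integral_eq_of_tauC_eq_zero [OpensMeasurableSpace S] (hκ : Measurable κ) {u : S → ℝ}
    (hu : u ∈ LipC c) (h : tauC c P κ X = 0) :
    ∀ᵐ ω ∂P, ∫ x, u x ∂κ ω = ∫ x, u x ∂law P X := by
  let K : Kernel Ω S := ⟨κ, hκ⟩
  have hmeas : Measurable fun ω => ENNReal.ofReal |∫ x, u x ∂κ ω - ∫ x, u x ∂law P X| :=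
    ((hu.1.stronglyMeasurable.integral_kernel (κ := K)).measurable.sub_const _).abs.ennreal_ofReal
  have hzero : ∫⁻ ω, ENNReal.ofReal |∫ x, u x ∂κ ω - ∫ x, u x ∂law P X| ∂P = 0 :=
    le_antisymm (le_of_le_of_eq (lintegral_mono fun ω =>
      le_biSup (fun u => ENNReal.ofReal |∫ x, u x ∂κ ω - ∫ x, u x ∂law P X|) hu) h) zero_le
  filter_upwards [(lintegral_eq_zero_iff hmeas).1 hzero] with ω hω
  simpa [sub_eq_zero] using hω

end DependenceCoefficient

theorem tauC_eq_zero_iff_indep_general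
    {S : Type*} [TopologicalSpace S] [PolishSpace S] [MeasurableSpace S] [BorelSpace S]
    {Ω : Type*} [mΩ : MeasurableSpace Ω] (P : Measure Ω) [IsProbabilityMeasure P]
    (c : S → S → ℝ)
    (X : Ω → S) (hX : Measurable X)
    (hsep : ∀ μ ν : Measure S, IsProbabilityMeasure μ → IsProbabilityMeasure ν →
      (∀ f ∈ LipC c, ∫ x, f x ∂μ = ∫ x, f x ∂ν) → μ = ν)
    (M : MeasurableSpace Ω) (hM : M ≤ mΩ)
    (κX : Ω → Measure S) (hκX : IsRCD P M X κX) :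
    tauC c P κX X = 0 ↔ Indep (MeasurableSpace.comap X inferInstance) M P := by
  constructor
  · intro hτ
    have hLip : ∀ f ∈ LipC c, ∀ᵐ ω ∂P, ∫ x, f x ∂κX ω = ∫ x, f x ∂law P X := fun f hf =>
      ae_integral_eq_of_tauC_eq_zero (hκX.measurable.mono hM le_rfl) hf hτ
    exact indep_comap_of_forall_map_cond_eq hM hX fun t ht hPt =>
      hκX.map_cond_eq_map_of_forall_ae_integral_eq hM hX
        (fun f hf => ⟨hf.1.measurable, hf.2.1⟩) hsep hLip ht hPt
  · intro hindep
    exact tauC_eq_zero_of_ae_eq_law (hκX.ae_eq_law_of_indep hM hX hindep)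

/-- **`τ_c` characterizes independence**: if `Lip_c` is a separating class, then
`τ_c(ℳ, X) = 0` if and only if `X` is independent of `ℳ`. -/
theorem tauC_eq_zero_iff_indep
    {S : Type*} [TopologicalSpace S] [PolishSpace S] [MeasurableSpace S] [BorelSpace S]
    {Ω : Type*} [mΩ : MeasurableSpace Ω] (P : Measure Ω) [IsProbabilityMeasure P]
    (c : S → S → ℝ) (hc0 : ∀ x y, 0 ≤ c x y) (hstar : StarCond c)
    (X : Ω → S) (hX : Measurable X)
    (x₀ : S) (hXint : ∫⁻ x, ENNReal.ofReal (c x x₀) ∂(P.map X) < ⊤)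
    (hsep : ∀ μ ν : Measure S, IsProbabilityMeasure μ → IsProbabilityMeasure ν →
      (∀ f ∈ LipC c, ∫ x, f x ∂μ = ∫ x, f x ∂ν) → μ = ν)
    (M : MeasurableSpace Ω) (hM : M ≤ mΩ)
    (κX : Ω → Measure S) (hκX : IsRCD P M X κX) :
    tauC c P κX X = 0 ↔ Indep (MeasurableSpace.comap X inferInstance) M P :=
  tauC_eq_zero_iff_indep_general (mΩ := mΩ) P c X hX hsep M hM κX hκX

end
end
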